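/- Let f : [0,1] → ℂ be continuously differentiable and let z ∈ ℂ with Re(z) > 0. Then β[f](z) = (2/z)·( (2z+1)·β[f](z+1) + β[(·−1/2) f′](z+1) ), where (·−1/2) f′ denotes the function u ↦ (u−1/2) f′(u). -/

import Mathlib

/-!
Put `w(u) = u(1-u)`. The function `(u - 1/2) f(u) w(u)^z` vanishes at both ends of `[0,1]`, so its
derivative integrates to zero. Since `(u - 1/2)(1 - 2u) = 2w(u) - 1/2`, that derivative is
`(u - 1/2) f'(u) w^z + (2z+1) f w^z - (z/2) f w^{z-1}`, and the vanishing of its integral is the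
functional equation.
-/

open MeasureTheory Set

/-- The generalized Beta function `β[f](z) = ∫₀¹ f(u) (u(1−u))^{z−1} du`. -/
noncomputable def betaFn (f : ℝ → ℂ) (z : ℂ) : ℂ :=
  ∫ u in Ioo (0:ℝ) 1, f u * ((u * (1 - u) : ℝ) : ℂ) ^ (z - 1)

lemma betaFn_eq_intervalIntegral (g : ℝ → ℂ) (s : ℂ) :
    betaFn g s = ∫ u in (0:ℝ)..1, g u * ((u * (1 - u) : ℝ) : ℂ) ^ (s - 1) := by
  rw [betaFn, intervalIntegral.integral_of_le zero_le_one, integral_Ioc_eq_integral_Ioo]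

lemma intervalIntegrable_cpow_mul_one_sub {s : ℂ} (hs : 0 < s.re) :
    IntervalIntegrable (fun u : ℝ => ((u * (1 - u) : ℝ) : ℂ) ^ (s - 1)) volume 0 1 := by
  refine (Complex.betaIntegral_convergent hs hs).congr fun u hu => ?_
  rw [uIoc_of_le zero_le_one] at hu
  rw [Complex.ofReal_mul, Complex.mul_cpow_ofReal_nonneg hu.1.le (by linarith [hu.2])]
  push_cast
  rfl

lemma intervalIntegrable_mul_cpow_mul_one_sub {g : ℝ → ℂ} (hg : ContinuousOn g (Icc 0 1))
    {s : ℂ} (hs : 0 < s.re) :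
    IntervalIntegrable (fun u : ℝ => g u * ((u * (1 - u) : ℝ) : ℂ) ^ (s - 1)) volume 0 1 :=
  (intervalIntegrable_cpow_mul_one_sub hs).continuousOn_mul (by rwa [uIcc_of_le zero_le_one])

lemma continuousOn_cpow_mul_one_sub {s : ℂ} (hs : 0 < s.re) :
    ContinuousOn (fun u : ℝ => ((u * (1 - u) : ℝ) : ℂ) ^ s) (Icc 0 1) := fun u hu =>
  (Complex.continuousAt_cpow_const_of_re_pos
    (Or.inl (by rw [Complex.ofReal_re]; nlinarith [hu.1, hu.2])) hs).comp_continuousWithinAt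
    (by fun_prop)

lemma hasDerivAt_cpow_mul_one_sub {u : ℝ} (hu : u ∈ Ioo 0 1) (s : ℂ) :
    HasDerivAt (fun y : ℝ => ((y * (1 - y) : ℝ) : ℂ) ^ s)
      (s * ((u * (1 - u) : ℝ) : ℂ) ^ (s - 1) * ((1 - 2 * u : ℝ) : ℂ)) u := by
  have hpos : 0 < u * (1 - u) := mul_pos hu.1 (by linarith [hu.2])
  have hpoly : HasDerivAt (fun y : ℝ => y * (1 - y)) (1 - 2 * u) u :=
    ((hasDerivAt_id' u).mul ((hasDerivAt_id' u).const_sub 1)).congr_deriv (by ring)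
  exact (Complex.hasStrictDerivAt_cpow_const (Complex.ofReal_mem_slitPlane.2 hpos)).hasDerivAt.comp
    u hpoly.ofReal_comp

lemma hasDerivAt_sub_half_mul_mul_cpow {f : ℝ → ℂ} {f' : ℂ} {u : ℝ} (hu : u ∈ Ioo 0 1)
    (hf : HasDerivAt f f' u) (s : ℂ) :
    HasDerivAt (fun y : ℝ => ((y - 1/2 : ℝ) : ℂ) * f y * ((y * (1 - y) : ℝ) : ℂ) ^ s)
      (((u - 1/2 : ℝ) : ℂ) * f' * ((u * (1 - u) : ℝ) : ℂ) ^ s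
        + (2 * s + 1) * (f u * ((u * (1 - u) : ℝ) : ℂ) ^ s)
        - s / 2 * (f u * ((u * (1 - u) : ℝ) : ℂ) ^ (s - 1))) u := by
  have hlin : HasDerivAt (fun y : ℝ => ((y - 1/2 : ℝ) : ℂ)) 1 u := by
    simpa using ((hasDerivAt_id u).sub_const (1/2)).ofReal_comp
  refine ((hlin.mul hf).mul (hasDerivAt_cpow_mul_one_sub hu s)).congr_deriv ?_
  have hw : ((u * (1 - u) : ℝ) : ℂ) ≠ 0 :=
    Complex.ofReal_ne_zero.2 (mul_pos hu.1 (by linarith [hu.2])).ne'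
  have hsplit : ((u * (1 - u) : ℝ) : ℂ) ^ s
      = ((u * (1 - u) : ℝ) : ℂ) ^ (s - 1) * ((u * (1 - u) : ℝ) : ℂ) := by
    simpa using Complex.cpow_add (s - 1) 1 hw
  rw [hsplit]
  simp only [Pi.mul_apply]
  push_cast
  ring

lemma integral_deriv_sub_half_mul_mul_cpow_eq_zero {f f' : ℝ → ℂ}
    (hderiv : ∀ u ∈ Icc (0:ℝ) 1, HasDerivWithinAt f (f' u) (Icc 0 1) u)
    (hf' : ContinuousOn f' (Icc 0 1)) {z : ℂ} (hz : 0 < z.re) :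
    (∫ u in (0:ℝ)..1, ((u - 1/2 : ℝ) : ℂ) * f' u * ((u * (1 - u) : ℝ) : ℂ) ^ z)
      + (2 * z + 1) * (∫ u in (0:ℝ)..1, f u * ((u * (1 - u) : ℝ) : ℂ) ^ z)
      - z / 2 * (∫ u in (0:ℝ)..1, f u * ((u * (1 - u) : ℝ) : ℂ) ^ (z - 1)) = 0 := by
  have hz1 : 0 < (z + 1).re := by rw [Complex.add_re, Complex.one_re]; linarith
  have hf : ContinuousOn f (Icc 0 1) := fun u hu => (hderiv u hu).continuousWithinAt
  have hlin : Continuous fun u : ℝ => ((u - 1/2 : ℝ) : ℂ) := by fun_prop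
  have hIa := intervalIntegrable_mul_cpow_mul_one_sub (hlin.continuousOn.mul hf') hz1
  have hIb := intervalIntegrable_mul_cpow_mul_one_sub hf hz1
  have hIc := intervalIntegrable_mul_cpow_mul_one_sub hf hz
  simp only [add_sub_cancel_right, Pi.mul_apply] at hIa hIb
  have hz0 : z ≠ 0 := fun h => by simp [h] at hz
  have hFTC := intervalIntegral.integral_eq_sub_of_hasDerivAt_of_le zero_le_one
    ((hlin.continuousOn.mul hf).mul (continuousOn_cpow_mul_one_sub hz))
    (fun u hu => hasDerivAt_sub_half_mul_mul_cpow hu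
      ((hderiv u (Ioo_subset_Icc_self hu)).hasDerivAt (Icc_mem_nhds hu.1 hu.2)) z)
    ((hIa.add (hIb.const_mul _)).sub (hIc.const_mul _))
  rw [intervalIntegral.integral_sub (hIa.add (hIb.const_mul _)) (hIc.const_mul _),
    intervalIntegral.integral_add hIa (hIb.const_mul _), intervalIntegral.integral_const_mul,
    intervalIntegral.integral_const_mul] at hFTC
  simpa [Complex.zero_cpow hz0] using hFTC

/-- For continuously differentiable `f : [0,1] → ℂ` (with derivative `f'`) and `Re z > 0`:
`β[f](z) = (2/z)((2z+1) β[f](z+1) + β[(·−1/2) f'](z+1))`. -/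
theorem betaFn_functional_equation
    (f f' : ℝ → ℂ)
    (hderiv : ∀ u ∈ Icc (0:ℝ) 1, HasDerivWithinAt f (f' u) (Icc 0 1) u)
    (hf' : ContinuousOn f' (Icc 0 1))
    (z : ℂ) (hz : 0 < z.re) :
    betaFn f z
      = (2 / z) * ((2 * z + 1) * betaFn f (z + 1)
          + betaFn (fun u => ((u - 1/2 : ℝ) : ℂ) * f' u) (z + 1)) := by
  have hz0 : z ≠ 0 := fun h => by simp [h] at hz
  have key := integral_deriv_sub_half_mul_mul_cpow_eq_zero hderiv hf' hz
  simp only [betaFn_eq_intervalIntegral, add_sub_cancel_right]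
  rw [div_mul_eq_mul_div, eq_div_iff hz0]
  linear_combination (-2 : ℂ) * key
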